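/- arXiv:2507.12077 — 4 statements merged into one kernel-verified Lean document; each statement's English description precedes it below -/
import Mathlib

section
/- Every finite poset (P,<) has a partition (B,U) of its elements such that the number of pairs (x,y) with x in B, y in U, and x < y is at least half the total number of pairs (x,y) with x < y in P. -/
/-!
Let `s(x)` be the number of elements above `x` minus the number below it. If `w < x` then
`s(x) ≤ s(w) - 2`, so `B = {s > 0}` is a down-set and no relation goes from `U = Bᶜ` to `B`;
hence `∑_B s = e(B,U) = -∑_U s`, i.e. `2 e(B,U) = ∑ |s|`. Finally `e(P,P) ≤ ∑ |s|` by induction: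
deleting an element `x` of least `|s(x)|` removes the relations through `x`, one for each `w`
comparable to `x`, and lowers each such `|s(w)|` by one, since minimality forces `s(w) > 0`
below `x` and `s(w) < 0` above it.
-/

open Finset
open scoped Classical

/-- `e X Y` counts pairs `(x,y)` with `x ∈ X`, `y ∈ Y`, `x < y`. -/
noncomputable def e {P : Type*} [Fintype P] [PartialOrder P] (X Y : Finset P) : ℕ :=
  ((X ×ˢ Y).filter fun p => p.1 < p.2).card

section Cut

variable {P : Type*} [PartialOrder P]

noncomputable def imbalance (S : Finset P) (x : P) : ℤ :=
  #(S.filter (x < ·)) - #(S.filter (· < x))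

lemma imbalance_add_two_le {S : Finset P} {w x : P} (hw : w ∈ S) (hx : x ∈ S) (hwx : w < x) :
    imbalance S x + 2 ≤ imbalance S w := by
  have habove : #(S.filter (x < ·)) < #(S.filter (w < ·)) :=
    card_lt_card ⟨monotone_filter_right _ fun _ _ hv => hwx.trans hv,
      fun h => lt_irrefl x (mem_filter.1 (h (mem_filter.2 ⟨hx, hwx⟩))).2⟩
  have hbelow : #(S.filter (· < w)) < #(S.filter (· < x)) :=
    card_lt_card ⟨monotone_filter_right _ fun _ _ hv => hv.trans hwx,
      fun h => lt_irrefl w (mem_filter.1 (h (mem_filter.2 ⟨hw, hwx⟩))).2⟩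
  unfold imbalance
  omega

lemma imbalance_erase {S : Finset P} {x : P} (hx : x ∈ S) (w : P) :
    imbalance (S.erase x) w =
      imbalance S w - (if w < x then 1 else 0) + (if x < w then 1 else 0) := by
  have hcard : ∀ q : P → Prop, #((S.erase x).filter q) = #(S.filter q) - (if q x then 1 else 0) := by
    intro q
    rw [filter_erase]
    split_ifs with hq
    · exact card_erase_of_mem (mem_filter.2 ⟨hx, hq⟩)
    · rw [erase_eq_of_notMem fun h => hq (mem_filter.1 h).2, Nat.sub_zero]
  have hle : ∀ q : P → Prop, (if q x then 1 else 0) ≤ #(S.filter q) := by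
    intro q
    split_ifs with hq
    · exact card_pos.2 ⟨x, mem_filter.2 ⟨hx, hq⟩⟩
    · exact Nat.zero_le _
  unfold imbalance
  rw [hcard, hcard, Nat.cast_sub (hle _), Nat.cast_sub (hle _)]
  push_cast
  ring

section MinimalImbalance

variable {S : Finset P} {x : P} (hx : x ∈ S)
  (hmin : ∀ w ∈ S, |imbalance S x| ≤ |imbalance S w|)
include hx hmin

lemma imbalance_pos_of_lt_of_min {w : P} (hw : w ∈ S) (hwx : w < x) : 0 < imbalance S w := by
  have hstep := imbalance_add_two_le hw hx hwx
  by_contra! hnonpos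
  have := abs_of_nonpos hnonpos
  linarith [hmin w hw, neg_le_abs (imbalance S x)]

lemma imbalance_neg_of_lt_of_min {w : P} (hw : w ∈ S) (hxw : x < w) : imbalance S w < 0 := by
  have hstep := imbalance_add_two_le hx hw hxw
  by_contra! hnonneg
  have := abs_of_nonneg hnonneg
  linarith [hmin w hw, le_abs_self (imbalance S x)]

lemma abs_imbalance_erase_of_min {w : P} (hw : w ∈ S) :
    |imbalance S w| =
      |imbalance (S.erase x) w| + (if w < x then 1 else 0) + (if x < w then 1 else 0) := by
  rw [imbalance_erase hx]
  by_cases hwx : w < x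
  · have hpos := imbalance_pos_of_lt_of_min hx hmin hw hwx
    rw [if_pos hwx, if_neg hwx.not_gt, abs_of_pos hpos, abs_of_nonneg (by omega)]
    ring
  · by_cases hxw : x < w
    · have hneg := imbalance_neg_of_lt_of_min hx hmin hw hxw
      rw [if_neg hwx, if_pos hxw, abs_of_neg hneg, abs_of_nonpos (by omega)]
      ring
    · simp [hwx, hxw]

end MinimalImbalance

variable [Fintype P]

lemma e_eq_sum_above (X Y : Finset P) : e X Y = ∑ x ∈ X, #(Y.filter (x < ·)) := by
  rw [e, card_filter, sum_product]
  exact sum_congr rfl fun x _ => (card_filter _ _).symm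

lemma e_eq_sum_below (X Y : Finset P) : e X Y = ∑ y ∈ Y, #(X.filter (· < y)) := by
  rw [e, card_filter, sum_product_right]
  exact sum_congr rfl fun y _ => (card_filter _ _).symm

lemma e_singleton_left (x : P) (Y : Finset P) : e {x} Y = #(Y.filter (x < ·)) := by
  rw [e_eq_sum_above, sum_singleton]

lemma e_singleton_right (X : Finset P) (y : P) : e X {y} = #(X.filter (· < y)) := by
  rw [e_eq_sum_below, sum_singleton]

lemma e_union_left {X Y : Finset P} (h : Disjoint X Y) (Z : Finset P) :
    e (X ∪ Y) Z = e X Z + e Y Z := by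
  rw [e, e, e, union_product, filter_union,
    card_union_of_disjoint (disjoint_filter_filter (disjoint_product.2 (Or.inl h)))]

lemma e_union_right (X : Finset P) {Y Z : Finset P} (h : Disjoint Y Z) :
    e X (Y ∪ Z) = e X Y + e X Z := by
  rw [e, e, e, product_union, filter_union,
    card_union_of_disjoint (disjoint_filter_filter (disjoint_product.2 (Or.inr h)))]

lemma e_insert_self {S : Finset P} {x : P} (hx : x ∉ S) :
    e (insert x S) (insert x S) = e S S + #(S.filter (· < x)) + #(S.filter (x < ·)) := by
  have hdisj : Disjoint {x} S := disjoint_singleton_left.2 hx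
  rw [insert_eq, e_union_left hdisj, e_union_right _ hdisj, e_union_right _ hdisj,
    e_singleton_left, e_singleton_left, e_singleton_right]
  simp only [filter_singleton, lt_irrefl, if_false, card_empty]
  ring

lemma e_eq_zero {X Y : Finset P} (h : ∀ x ∈ X, ∀ y ∈ Y, ¬x < y) : e X Y = 0 := by
  rw [e, card_eq_zero, filter_eq_empty_iff]
  rintro ⟨x, y⟩ hxy
  exact h x (mem_product.1 hxy).1 y (mem_product.1 hxy).2

theorem e_self_le_sum_abs_imbalance (S : Finset P) :
    (e S S : ℤ) ≤ ∑ w ∈ S, |imbalance S w| := by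
  induction S using Finset.strongInduction with
  | _ S ih =>
  rcases S.eq_empty_or_nonempty with rfl | hne
  · simp [e]
  obtain ⟨x, hx, hmin⟩ := S.exists_min_image (fun w => |imbalance S w|) hne
  set S' := S.erase x
  have hS : S = insert x S' := (insert_erase hx).symm
  have hx' : x ∉ S' := notMem_erase x S
  have hsum : ∑ w ∈ S, |imbalance S w| = |imbalance S x| + ∑ w ∈ S', |imbalance S' w|
      + #(S'.filter (· < x)) + #(S'.filter (x < ·)) := by
    rw [← insert_erase hx, sum_insert hx', ← sum_boole, ← sum_boole, add_assoc, add_assoc,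
      ← sum_add_distrib, ← sum_add_distrib, insert_erase hx]
    congr 1
    exact sum_congr rfl fun w hw =>
      by rw [abs_imbalance_erase_of_min hx hmin (mem_of_mem_erase hw), add_assoc]
  have he : (e S S : ℤ) = e S' S' + #(S'.filter (· < x)) + #(S'.filter (x < ·)) := by
    conv_lhs => rw [hS]
    rw [e_insert_self hx']
    push_cast
    ring
  linarith [ih S' (erase_ssubset hx), abs_nonneg (imbalance S x)]

lemma sum_imbalance_univ (X : Finset P) :
    ∑ x ∈ X, imbalance univ x = (e X Xᶜ : ℤ) - e Xᶜ X := by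
  have habove : e X univ = e X X + e X Xᶜ := by
    rw [← e_union_right _ disjoint_compl_right, union_compl]
  have hbelow : e univ X = e X X + e Xᶜ X := by
    rw [← e_union_left disjoint_compl_right, union_compl]
  rw [e_eq_sum_above] at habove
  rw [e_eq_sum_below] at hbelow
  simp only [imbalance, sum_sub_distrib, ← Nat.cast_sum, habove, hbelow]
  push_cast
  ring

lemma sum_abs_imbalance_eq_two_mul_e (B : Finset P)
    (hB : ∀ x, x ∈ B ↔ 0 < imbalance univ x) :
    ∑ x, |imbalance (univ : Finset P) x| = 2 * (e B Bᶜ : ℤ) := by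
  have hback : e Bᶜ B = 0 := e_eq_zero fun w hw y hy hwy => by
    have := imbalance_add_two_le (mem_univ w) (mem_univ y) hwy
    rw [mem_compl, hB] at hw
    rw [hB] at hy
    omega
  have hsumB : ∑ x ∈ B, |imbalance univ x| = e B Bᶜ := by
    rw [sum_congr rfl fun x hx => abs_of_pos ((hB x).1 hx), sum_imbalance_univ, hback]
    simp
  have hsumU : ∑ x ∈ Bᶜ, |imbalance univ x| = e B Bᶜ := by
    rw [sum_congr rfl fun x hx => abs_of_nonpos (not_lt.1 (mt (hB x).2 (mem_compl.1 hx))),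
      sum_neg_distrib, sum_imbalance_univ, compl_compl, hback]
    simp
  rw [← sum_add_sum_compl B, hsumB, hsumU]
  ring

end Cut

/-- Every finite poset has a cut containing at least half of its order relations. -/
theorem large_cut_exists (P : Type*) [Fintype P] [PartialOrder P] :
    ∃ B U : Finset P, Disjoint B U ∧ B ∪ U = Finset.univ ∧
      e (Finset.univ : Finset P) Finset.univ ≤ 2 * e B U := by
  set B : Finset P := univ.filter (0 < imbalance univ ·)
  refine ⟨B, Bᶜ, disjoint_compl_right, union_compl B, ?_⟩
  have hcut := sum_abs_imbalance_eq_two_mul_e B fun x => by simp [B]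
  have hbound := e_self_le_sum_abs_imbalance (univ : Finset P)
  rw [hcut] at hbound
  exact_mod_cast hbound
end

section
/- Let (P,<) be a finite poset and let (B,U) be a partition of P with x in U, y in B, and x < y. Define V = (B \ {y}) ∪ {x} and W = (U \ {x}) ∪ {y}. Then e(V,W) ≥ 1 + e(B,U). -/
open Finset
open scoped Classical

/-!
Swapping `x` and `y` maps every pair `(a, b) ∈ B × U` with `a < b` to a pair `(σ a, σ b) ∈ V × W`
with `σ a < σ b`, where `σ` is the transposition of `x` and `y`: a comparable pair through `y` on
the left or `x` on the right only gets stretched by `x < y`. This injection misses `(x, y)`, which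
is itself counted by `e V W`.
-/

open Equiv

section Swap

variable {P : Type*} [DecidableEq P] {x y : P}

theorem swap_mem_insert_erase {B : Finset P} {a : P} (hxB : x ∉ B) (ha : a ∈ B) :
    swap x y a ∈ insert x (B.erase y) := by
  by_cases hay : a = y
  · simp [hay]
  · rw [swap_apply_of_ne_of_ne (ne_of_mem_of_not_mem ha hxB) hay]
    exact mem_insert_of_mem (mem_erase.mpr ⟨hay, ha⟩)

theorem swap_lt_swap [Preorder P] {a b : P} (hxy : x < y) (hax : a ≠ x) (hby : b ≠ y)
    (hab : a < b) : swap x y a < swap x y b := by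
  by_cases hay : a = y <;> by_cases hbx : b = x
  · subst hay hbx
    exact absurd hab hxy.asymm
  · subst hay
    rw [swap_apply_right, swap_apply_of_ne_of_ne hbx hby]
    exact hxy.trans hab
  · subst hbx
    rw [swap_apply_left, swap_apply_of_ne_of_ne hax hay]
    exact hab.trans hxy
  · rwa [swap_apply_of_ne_of_ne hax hay, swap_apply_of_ne_of_ne hbx hby]

theorem e_lt_e_swap [Fintype P] [PartialOrder P] {B U : Finset P} (hxB : x ∉ B) (hyU : y ∉ U)
    (hxy : x < y) : e B U < e (insert x (B.erase y)) (insert y (U.erase x)) := by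
  rw [e, e, ← card_map (prodCongr (swap x y) (swap x y)).toEmbedding]
  refine card_lt_card (ssubset_iff.mpr ⟨(x, y), ?_, ?_⟩)
  · simp only [mem_map, mem_filter, mem_product, Equiv.coe_toEmbedding, prodCongr_apply,
      Prod.map, Prod.mk.injEq, swap_apply_eq_iff, swap_apply_left, swap_apply_right, not_exists,
      not_and]
    rintro ⟨a, b⟩ ⟨-, hab⟩ rfl rfl
    exact hxy.asymm hab
  · intro q hq
    obtain rfl | hq := mem_insert.mp hq
    · simp [hxy]
    obtain ⟨⟨a, b⟩, hp, rfl⟩ := mem_map.mp hq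
    obtain ⟨⟨ha, hb⟩, hab⟩ := by simpa only [mem_filter, mem_product] using hp
    simp only [Equiv.coe_toEmbedding, prodCongr_apply, Prod.map]
    refine mem_filter.mpr ⟨mem_product.mpr ⟨swap_mem_insert_erase hxB ha, ?_⟩, ?_⟩
    · simpa only [swap_comm] using swap_mem_insert_erase (y := x) hyU hb
    · exact swap_lt_swap hxy (ne_of_mem_of_not_mem ha hxB) (ne_of_mem_of_not_mem hb hyU) hab

end Swap

theorem swap_increases_general (P : Type*) [Fintype P] [PartialOrder P]
    (B U : Finset P) (hdisj : Disjoint B U)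
    (x y : P) (hx : x ∈ U) (hy : y ∈ B) (hxy : x < y) :
    1 + e B U ≤ e (insert x (B.erase y)) (insert y (U.erase x)) :=
  Nat.one_add_le_iff.mpr <|
    e_lt_e_swap (disjoint_right.mp hdisj hx) (disjoint_left.mp hdisj hy) hxy

/-- Swapping a reversed pair increases the cut size by at least one. -/
theorem swap_increases (P : Type*) [Fintype P] [PartialOrder P]
    (B U : Finset P) (hdisj : Disjoint B U) (hcover : B ∪ U = Finset.univ)
    (x y : P) (hx : x ∈ U) (hy : y ∈ B) (hxy : x < y) :
    1 + e B U ≤ e (insert x (B.erase y)) (insert y (U.erase x)) :=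
  swap_increases_general P B U hdisj x y hx hy hxy
end

section
/- Let u_1 > u_2 > ... > u_t be a longest chain in a finite poset P with t ≥ 2. Then there exists an index β with 1 < β ≤ t such that u_α is a surplus element for all α < β, u_α is a deficit element for all α > β, and u_β is either balanced or deficit. -/
/-!
Along a longest chain `u 0 > u 1 > ⋯ > u (t-1)` the number of elements above `u i` strictly
increases and the number below strictly decreases. By maximality of the chain, `u 0` has nothing
above it and `u (t-1)` nothing below it, while `u 0` has `u (t-1)` below it. Hence the two counts
cross exactly once, and `β` is the first index where the count below no longer exceeds the count
above.
-/

open Finset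
open scoped Classical

section Counting

variable {P : Type*} [Fintype P] [PartialOrder P]

theorem e_singleton_univ (x : P) : e {x} (univ : Finset P) = #{y | x < y} := by
  rw [e, singleton_product, filter_map, card_map]
  rfl

theorem e_univ_singleton (x : P) : e (univ : Finset P) {x} = #{y | y < x} := by
  rw [e, product_singleton, filter_map, card_map]
  rfl

theorem strictMono_card_filter_lt : StrictMono fun x : P => #{y | y < x} := by
  intro a b hab
  refine card_lt_card ((ssubset_iff_of_subset ?_).2 ⟨a, by simpa using hab, by simp⟩)
  exact monotone_filter_right _ fun _ _ hy => hy.trans hab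

theorem strictAnti_card_filter_gt : StrictAnti fun x : P => #{y | x < y} := by
  intro a b hab
  refine card_lt_card ((ssubset_iff_of_subset ?_).2 ⟨b, by simpa using hab, by simp⟩)
  exact monotone_filter_right _ fun _ _ hy => hab.trans hy

end Counting

section LongestChain

variable {P : Type*} [PartialOrder P] {n : ℕ}

theorem StrictAnti.isMax_head_of_forall_not_strictAnti {u : Fin (n + 1) → P} (hu : StrictAnti u)
    (hlong : ∀ v : Fin (n + 2) → P, ¬ StrictAnti v) : IsMax (u 0) :=
  isMax_iff_forall_not_lt.2 fun _ hx => hlong _ (hu.vecCons hx)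

theorem StrictAnti.isMin_last_of_forall_not_strictAnti {u : Fin (n + 1) → P} (hu : StrictAnti u)
    (hlong : ∀ v : Fin (n + 2) → P, ¬ StrictAnti v) : IsMin (u (Fin.last n)) := by
  have hdual : IsMax (OrderDual.toDual (u (Fin.rev 0))) :=
    (hu.comp Fin.rev_strictAnti).dual_right.isMax_head_of_forall_not_strictAnti
      fun v hv => hlong _ (hv.comp Fin.rev_strictAnti).dual_right
  simpa using hdual

end LongestChain

theorem Fin.exists_first_crossing {α : Type*} [LinearOrder α] {n : ℕ} {f g : Fin (n + 1) → α}
    (hf : StrictMono f) (hg : Antitone g) (h0 : f 0 < g 0)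
    (hlast : g (Fin.last n) ≤ f (Fin.last n)) :
    ∃ β : Fin (n + 1), 0 < β ∧ (∀ i < β, f i < g i) ∧ (∀ i, β < i → g i < f i) ∧ g β ≤ f β := by
  have hne : ({i | g i ≤ f i} : Finset (Fin (n + 1))).Nonempty := ⟨Fin.last n, by simpa using hlast⟩
  have hβ : g (min' _ hne) ≤ f (min' _ hne) := by simpa using min'_mem _ hne
  refine ⟨min' _ hne, ?_, fun i hi => ?_, fun i hi => ?_, hβ⟩
  · refine Fin.pos_iff_ne_zero.2 fun h => ?_
    exact (h ▸ hβ).not_gt h0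
  · by_contra! h
    exact (min'_le _ i (by simpa using h)).not_gt hi
  · exact (hg hi.le).trans_lt (hβ.trans_lt (hf hi))

/-- Along a longest chain there is an index `β` such that all earlier elements are
surplus, all later ones are deficit, and `u β` itself is balanced or deficit. -/
theorem longest_chain_split (P : Type*) [Fintype P] [PartialOrder P]
    (t : ℕ) (ht : 2 ≤ t) (u : Fin t → P) (hu : StrictAnti u)
    (hmax : ∀ (s : ℕ) (v : Fin s → P), StrictAnti v → s ≤ t) :
    ∃ β : Fin t, 0 < β.1 ∧
      (∀ α : Fin t, α < β →
        e {u α} (Finset.univ : Finset P) < e (Finset.univ : Finset P) {u α}) ∧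
      (∀ α : Fin t, β < α →
        e (Finset.univ : Finset P) {u α} < e {u α} (Finset.univ : Finset P)) ∧
      (e {u β} (Finset.univ : Finset P) = e (Finset.univ : Finset P) {u β} ∨
        e (Finset.univ : Finset P) {u β} < e {u β} (Finset.univ : Finset P)) := by
  obtain ⟨n, rfl⟩ : ∃ n, t = n + 1 := ⟨t - 1, by omega⟩
  have hlong : ∀ v : Fin (n + 2) → P, ¬ StrictAnti v := fun v hv => by
    simpa using hmax _ v hv
  have hhead : #{y | u 0 < y} = 0 := by
    simpa using fun y => (hu.isMax_head_of_forall_not_strictAnti hlong).not_lt (b := y)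
  have hlast : #{y | y < u (Fin.last n)} = 0 := by
    simpa using fun y => (hu.isMin_last_of_forall_not_strictAnti hlong).not_lt (b := y)
  have hlast_pos : (0 : Fin (n + 1)) < Fin.last n := by
    rw [Fin.lt_def, Fin.val_zero, Fin.val_last]
    omega
  have hbelow_head : 0 < #{y | y < u 0} :=
    card_pos.2 ⟨u (Fin.last n), by simpa using hu hlast_pos⟩
  obtain ⟨β, hβ0, hbefore, hafter, hβ⟩ := Fin.exists_first_crossing
    (strictAnti_card_filter_gt.comp hu)
    (strictMono_card_filter_lt.comp_strictAnti hu).antitone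
    (by simpa [hhead] using hbelow_head) (by simp [hlast])
  simp only [e_singleton_univ, e_univ_singleton]
  exact ⟨β, hβ0, hbefore, hafter, hβ.eq_or_lt.imp_left Eq.symm⟩
end

section
/- Let (P,<) be a finite poset and let a be an element covered by w and covering b (b ⋖ a ⋖ w), with a balanced in P. Let Q be the poset obtained by removing the two cover relations (b,a) and (a,w), and assume the removal yields a valid partial order. Then e_P(P,P) = e_Q(Q,Q) + 2 and a is balanced in Q. -/
open Finset
open scoped Classical

/-- `eR r X Y` counts pairs `(x,y)` with `x ∈ X`, `y ∈ Y`, `r x y`. -/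
noncomputable def eR {P : Type*} [Fintype P] (r : P → P → Prop) (X Y : Finset P) : ℕ :=
  ((X ×ˢ Y).filter fun p => r p.1 p.2).card

/-- Removing the two cover relations `(b,a)` and `(a,w)` around a balanced element `a`
(assuming the result is a partial order) drops the number of relations by `2`
and keeps `a` balanced. -/
theorem remove_two_covers (P : Type*) [Fintype P] [PartialOrder P]
    (b a w : P) (hba : b ⋖ a) (haw : a ⋖ w)
    (ha : eR (· < · : P → P → Prop) {a} Finset.univ
        = eR (· < · : P → P → Prop) Finset.univ {a})
    (htrans : Transitive (fun p q : P => p < q ∧ ¬(p = b ∧ q = a) ∧ ¬(p = a ∧ q = w))) :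
    eR (· < · : P → P → Prop) Finset.univ Finset.univ =
      eR (fun p q : P => p < q ∧ ¬(p = b ∧ q = a) ∧ ¬(p = a ∧ q = w))
        Finset.univ Finset.univ + 2 ∧
    eR (fun p q : P => p < q ∧ ¬(p = b ∧ q = a) ∧ ¬(p = a ∧ q = w)) {a} Finset.univ =
      eR (fun p q : P => p < q ∧ ¬(p = b ∧ q = a) ∧ ¬(p = a ∧ q = w)) Finset.univ {a} := by
  classical
  have hba' : b < a := hba.lt
  have haw' : a < w := haw.lt
  have hbne : b ≠ a := ne_of_lt hba'
  have hane : a ≠ w := ne_of_lt haw'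
  unfold eR
  constructor
  · have hset :
        ((Finset.univ ×ˢ Finset.univ).filter
            fun p : P × P => p.1 < p.2 ∧ ¬(p.1 = b ∧ p.2 = a) ∧ ¬(p.1 = a ∧ p.2 = w))
          = ((Finset.univ ×ˢ Finset.univ).filter fun p : P × P => p.1 < p.2)
              \ {(b, a), (a, w)} := by
      ext ⟨p, q⟩
      simp only [Finset.mem_filter, Finset.mem_sdiff, Finset.mem_insert,
        Finset.mem_singleton, Finset.mem_product, Finset.mem_univ, true_and,
        Prod.mk.injEq]
      tauto
    have hsub : ({(b, a), (a, w)} : Finset (P × P))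
        ⊆ ((Finset.univ ×ˢ Finset.univ).filter fun p : P × P => p.1 < p.2) := by
      intro x hx
      simp only [Finset.mem_insert, Finset.mem_singleton] at hx
      rcases hx with rfl | rfl <;> simp [hba', haw']
    have hc2 : ({(b, a), (a, w)} : Finset (P × P)).card = 2 := by
      rw [Finset.card_insert_of_notMem, Finset.card_singleton]
      simp [Prod.ext_iff, hbne]
    have hle := Finset.card_le_card hsub
    have key :
        (((Finset.univ ×ˢ Finset.univ).filter
            fun p : P × P => p.1 < p.2 ∧ ¬(p.1 = b ∧ p.2 = a) ∧ ¬(p.1 = a ∧ p.2 = w)).card) + 2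
          = (((Finset.univ ×ˢ Finset.univ).filter fun p : P × P => p.1 < p.2).card) := by
      rw [hset, Finset.card_sdiff_of_subset hsub, hc2]
      omega
    convert key.symm using 3
    all_goals ext ⟨p, q⟩; simp only [Finset.mem_filter]
  · have h1 :
        (({a} ×ˢ Finset.univ).filter
            fun p : P × P => p.1 < p.2 ∧ ¬(p.1 = b ∧ p.2 = a) ∧ ¬(p.1 = a ∧ p.2 = w))
          = (({a} ×ˢ Finset.univ).filter fun p : P × P => p.1 < p.2) \ {(a, w)} := by
      ext ⟨p, q⟩
      simp only [Finset.mem_filter, Finset.mem_sdiff, Finset.mem_singleton,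
        Finset.mem_product, Finset.mem_univ, and_true, Prod.mk.injEq]
      constructor
      · rintro ⟨rfl, h, h2, h3⟩
        exact ⟨⟨rfl, h⟩, fun hh => h3 ⟨hh.1, hh.2⟩⟩
      · rintro ⟨⟨rfl, h⟩, hne⟩
        refine ⟨rfl, h, fun hh => hbne (hh.1.symm), fun hh => hne ⟨hh.1, hh.2⟩⟩
    have h2 :
        ((Finset.univ ×ˢ {a}).filter
            fun p : P × P => p.1 < p.2 ∧ ¬(p.1 = b ∧ p.2 = a) ∧ ¬(p.1 = a ∧ p.2 = w))
          = ((Finset.univ ×ˢ {a}).filter fun p : P × P => p.1 < p.2) \ {(b, a)} := by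
      ext ⟨p, q⟩
      simp only [Finset.mem_filter, Finset.mem_sdiff, Finset.mem_singleton,
        Finset.mem_product, Finset.mem_univ, true_and, Prod.mk.injEq]
      constructor
      · rintro ⟨rfl, h, h2, h3⟩
        exact ⟨⟨rfl, h⟩, fun hh => h2 ⟨hh.1, hh.2⟩⟩
      · rintro ⟨⟨rfl, h⟩, hne⟩
        refine ⟨rfl, h, fun hh => hne ⟨hh.1, hh.2⟩, fun hh => hane hh.2⟩
    have hsub1 : ({(a, w)} : Finset (P × P))
        ⊆ (({a} ×ˢ Finset.univ).filter fun p : P × P => p.1 < p.2) := by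
      intro x hx
      simp only [Finset.mem_singleton] at hx
      subst hx; simp [haw']
    have hsub2 : ({(b, a)} : Finset (P × P))
        ⊆ ((Finset.univ ×ˢ {a}).filter fun p : P × P => p.1 < p.2) := by
      intro x hx
      simp only [Finset.mem_singleton] at hx
      subst hx; simp [hba']
    have hle1 := Finset.card_le_card hsub1
    have hle2 := Finset.card_le_card hsub2
    have ha' :
        ((({a} : Finset P) ×ˢ Finset.univ).filter fun p : P × P => p.1 < p.2).card
          = ((Finset.univ ×ˢ ({a} : Finset P)).filter fun p : P × P => p.1 < p.2).card := by
      unfold eR at ha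
      convert ha using 3
    have key :
        ((({a} ×ˢ Finset.univ).filter
            fun p : P × P => p.1 < p.2 ∧ ¬(p.1 = b ∧ p.2 = a) ∧ ¬(p.1 = a ∧ p.2 = w)).card)
          = (((Finset.univ ×ˢ {a}).filter
            fun p : P × P => p.1 < p.2 ∧ ¬(p.1 = b ∧ p.2 = a) ∧ ¬(p.1 = a ∧ p.2 = w)).card) := by
      rw [h1, h2, Finset.card_sdiff_of_subset hsub1, Finset.card_sdiff_of_subset hsub2,
        Finset.card_singleton, Finset.card_singleton]
      omega
    convert key using 3
end
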